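/- For all integers m, n ≥ 3, γ^SID(K_m × C_n) ≥ ⌊n/3⌋·(m + 2). -/

import Mathlib

open SimpleGraph Set

/-- Closed neighborhood of a vertex. -/
def cNbr {V : Type*} (G : SimpleGraph V) (v : V) : Set V := insert v (G.neighborSet v)

/-- `S` is a self-identifying code of `G`. -/
def IsSID {V : Type*} (G : SimpleGraph V) (S : Set V) : Prop :=
  S.Nonempty ∧ ∀ v : V, (cNbr G v ∩ S).Nonempty ∧
    (⋂ c ∈ cNbr G v ∩ S, cNbr G c) = {v}

/-- Minimum cardinality of a self-identifying code. -/
noncomputable def gammaSID {V : Type*} (G : SimpleGraph V) : ℕ :=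
  sInf {k | ∃ S : Set V, IsSID G S ∧ S.ncard = k}

/-- Direct product of the complete graph `K_m` with the path `P_n`. -/
def KmPn (m n : ℕ) : SimpleGraph (Fin m × Fin n) where
  Adj u w := u.1 ≠ w.1 ∧ ((u.2 : ℕ) + 1 = (w.2 : ℕ) ∨ (w.2 : ℕ) + 1 = (u.2 : ℕ))
  symm := ⟨fun u w h => ⟨h.1.symm, h.2.symm⟩⟩
  loopless := ⟨fun u h => h.1 rfl⟩

/-- Direct product of the complete graph `K_m` with the cycle `C_n`. -/
def KmCn (m n : ℕ) : SimpleGraph (Fin m × ZMod n) where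
  Adj u w := u.1 ≠ w.1 ∧ (u.2 + 1 = w.2 ∨ w.2 + 1 = u.2)
  symm := ⟨fun u w h => ⟨h.1.symm, h.2.symm⟩⟩
  loopless := ⟨fun u h => h.1 rfl⟩

/-!
Fix three consecutive columns `j, j + 1, j + 2` of `K_m × C_n` and let `A, B, C ⊆ Fin m` be the
rows in which a self-identifying code meets them. Separating vertices of these columns from
suitable nearby vertices forces a few local constraints on `A, B, C`, and these alone imply
`#A + #B + #C ≥ m + 2`: if at most one row misses `B`, the constraints force `#A + #C ≥ 3`; if two
rows miss `B`, then `A ∪ C` covers every row and `#B + #(A ∩ C) ≥ 2`. The `⌊n/3⌋` disjoint windows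
of three columns then give the bound.
-/

section SelfIdentifying

variable {V : Type*} {G : SimpleGraph V} {S : Set V} {v w : V}

lemma mem_cNbr_iff : w ∈ cNbr G v ↔ w = v ∨ G.Adj v w := Iff.rfl

lemma mem_cNbr_comm : w ∈ cNbr G v ↔ v ∈ cNbr G w := by
  simp only [mem_cNbr_iff, eq_comm, G.adj_comm]

lemma isSID_iff : IsSID G S ↔
    S.Nonempty ∧ ∀ v u, u ≠ v → ∃ c ∈ S, c ∈ cNbr G v ∧ u ∉ cNbr G c := by
  refine ⟨fun hS ↦ ⟨hS.1, fun v u huv ↦ ?_⟩, fun ⟨hne, hsep⟩ ↦ ⟨hne, fun v ↦ ⟨?_, ?_⟩⟩⟩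
  · by_contra! h
    have hu : u ∈ ⋂ c ∈ cNbr G v ∩ S, cNbr G c := mem_iInter₂.mpr fun c hc ↦ h c hc.2 hc.1
    rw [(hS.2 v).2] at hu
    exact huv hu
  · obtain ⟨s, hs⟩ := hne
    by_cases hsv : s = v
    · exact ⟨s, .inl hsv, hs⟩
    · obtain ⟨c, hcS, hcv, -⟩ := hsep v s hsv
      exact ⟨c, hcv, hcS⟩
  · refine eq_singleton_iff_unique_mem.mpr ⟨mem_iInter₂.mpr fun c hc ↦ mem_cNbr_comm.mp hc.1,
      fun u hu ↦ ?_⟩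
    by_contra huv
    obtain ⟨c, hcS, hcv, hcu⟩ := hsep v u huv
    exact hcu (mem_iInter₂.mp hu c ⟨hcv, hcS⟩)

lemma le_gammaSID {k : ℕ} (hex : ∃ S, IsSID G S) (h : ∀ S, IsSID G S → k ≤ S.ncard) :
    k ≤ gammaSID G := by
  obtain ⟨S, hS⟩ := hex
  exact le_csInf ⟨_, S, hS, rfl⟩ (by rintro _ ⟨S, hS, rfl⟩; exact h S hS)

end SelfIdentifying

namespace Finset

variable {α : Type*} [Fintype α]

lemma three_le_card_of_forall_not_subset_pair [DecidableEq α] (hα : 2 ≤ Fintype.card α)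
    {s : Finset α} (hs : ∀ i i', i ≠ i' → ¬ s ⊆ {i, i'}) : 3 ≤ #s := by
  by_contra! h
  obtain ⟨t, hst, -, ht⟩ := exists_subsuperset_card_eq (n := 2) (subset_univ s) (by omega)
    (by rwa [card_univ])
  obtain ⟨i, i', hii', rfl⟩ := card_eq_two.mp ht
  exact hs i i' hii' hst

lemma three_le_card_add_card [DecidableEq α] (hα : 2 ≤ Fintype.card α) {A C : Finset α}
    (hAC : ∀ i i', i ≠ i' → ¬ A ⊆ {i, i'} ∨ ¬ C ⊆ {i})
    (hCA : ∀ i i', i ≠ i' → ¬ C ⊆ {i, i'} ∨ ¬ A ⊆ {i}) : 3 ≤ #A + #C := by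
  rcases C.eq_empty_or_nonempty with rfl | ⟨q, hq⟩
  · have := three_le_card_of_forall_not_subset_pair hα fun i i' hii' ↦
      (hAC i i' hii').resolve_right (by simp)
    omega
  rcases A.eq_empty_or_nonempty with rfl | ⟨p, hp⟩
  · have := three_le_card_of_forall_not_subset_pair hα fun i i' hii' ↦
      (hCA i i' hii').resolve_right (by simp)
    omega
  by_contra! h
  obtain rfl : A = {p} := eq_singleton_iff_unique_mem.mpr ⟨hp, fun x hx ↦
    card_le_one.mp (by have := card_pos.mpr ⟨q, hq⟩; omega) x hx p hp⟩
  obtain rfl : C = {q} := eq_singleton_iff_unique_mem.mpr ⟨hq, fun x hx ↦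
    card_le_one.mp (by simp only [card_singleton] at h; omega) x hx q hq⟩
  obtain ⟨i', hi'q, hpi'⟩ : ∃ i' ≠ q, p = q ∨ p = i' := by
    by_cases hpq : p = q
    · obtain ⟨i', hi'⟩ := Fintype.exists_ne_of_one_lt_card hα q
      exact ⟨i', hi', .inl hpq⟩
    · exact ⟨p, hpq, .inr rfl⟩
  simpa [hpi'] using hAC q i' hi'q.symm

lemma two_le_card_add_card (hα : 2 ≤ Fintype.card α) {B D : Finset α}
    (hD : ∀ i, i ∈ D ∨ ¬ B ⊆ {i}) : 2 ≤ #B + #D := by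
  rcases B.eq_empty_or_nonempty with rfl | ⟨p, hp⟩
  · have : D = univ := eq_univ_of_forall fun i ↦ (hD i).resolve_right (by simp)
    simpa [this] using hα
  by_contra! h
  have hB : B ⊆ {p} := fun x hx ↦ mem_singleton.mpr <| card_le_one.mp (by omega) x hx p hp
  have := card_pos.mpr ⟨p, hp⟩
  have := card_pos.mpr ⟨p, (hD p).resolve_right (not_not.mpr hB)⟩
  omega

lemma card_add_two_le_card_add_card_add_card [DecidableEq α] (hα : 2 ≤ Fintype.card α)
    {A B C : Finset α}
    (hB : ∀ i i', i ≠ i' → i ∈ B ∨ i' ∈ A ∨ i' ∈ C)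
    (hA : ∀ i, i ∈ A ∨ ¬ B ⊆ {i}) (hC : ∀ i, i ∈ C ∨ ¬ B ⊆ {i})
    (hAC : ∀ i i', i ≠ i' → ¬ A ⊆ {i, i'} ∨ ¬ C ⊆ {i})
    (hCA : ∀ i i', i ≠ i' → ¬ C ⊆ {i, i'} ∨ ¬ A ⊆ {i}) :
    Fintype.card α + 2 ≤ #A + #B + #C := by
  by_cases hBc : ∃ i₀ i₁, i₀ ≠ i₁ ∧ i₀ ∉ B ∧ i₁ ∉ B
  · obtain ⟨i₀, i₁, h01, hi₀, hi₁⟩ := hBc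
    have hAC_univ : A ∪ C = univ := eq_univ_of_forall fun i ↦ by
      rcases eq_or_ne i₀ i with rfl | hi
      · simpa [hi₁] using hB i₁ i₀ h01.symm
      · simpa [hi₀] using hB i₀ i hi
    have hBAC := two_le_card_add_card hα (D := A ∩ C) fun i ↦ by
      rcases hA i with h | h
      · rcases hC i with h' | h'
        · exact .inl (mem_inter.mpr ⟨h, h'⟩)
        · exact .inr h'
      · exact .inr h
    have hunion := card_union_add_card_inter A C
    rw [hAC_univ, card_univ] at hunion
    omega
  · push Not at hBc
    have hBc1 : #Bᶜ ≤ 1 := card_le_one.mpr fun i₀ h₀ i₁ h₁ ↦ by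
      by_contra h01
      exact mem_compl.mp h₁ (hBc i₀ i₁ h01 (mem_compl.mp h₀))
    have hBcard := card_add_card_compl B
    have hAC3 := three_le_card_add_card hα hAC hCA
    omega

lemma mul_le_sum_range_of_le_sum_blocks {f : ℕ → ℕ} {c k : ℕ}
    (h : ∀ s, c ≤ ∑ t ∈ range k, f (k * s + t)) (q : ℕ) :
    q * c ≤ ∑ t ∈ range (k * q), f t := by
  induction q with
  | zero => simp
  | succ q ih =>
    rw [Nat.mul_succ, sum_range_add, Nat.succ_mul]
    exact Nat.add_le_add ih (h q)

end Finset

lemma ZMod.two_ne_zero_of_three_le {n : ℕ} (hn : 3 ≤ n) : (2 : ZMod n) ≠ 0 := by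
  exact_mod_cast (ZMod.natCast_eq_zero_iff 2 n).not.mpr
    (Nat.not_dvd_of_pos_of_lt two_pos (by omega))

namespace KmCn

open Finset

variable {m n : ℕ} {S : Set (Fin m × ZMod n)}

lemma mem_cNbr {i r : Fin m} {k l : ZMod n} :
    (r, l) ∈ cNbr (KmCn m n) (i, k) ↔ r = i ∧ l = k ∨ i ≠ r ∧ (k + 1 = l ∨ l + 1 = k) := by
  simp [mem_cNbr_iff, KmCn]

lemma isSID_univ (hm : 0 < m) (hn : 3 ≤ n) : IsSID (KmCn m n) Set.univ := by
  have := ZMod.two_ne_zero_of_three_le hn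
  refine isSID_iff.mpr ⟨⟨(⟨0, hm⟩, 0), trivial⟩, fun ⟨i, k⟩ ⟨r, l⟩ huv ↦ ?_⟩
  by_cases hadj : (r, l) ∈ cNbr (KmCn m n) (i, k)
  -- the mirror image of `(r, l)` across column `k` is a neighbour of `(i, k)` in row `r`
  · refine ⟨(r, 2 * k - l), trivial, ?_, ?_⟩ <;> simp only [mem_cNbr] at * <;> grind
  · exact ⟨(i, k), trivial, mem_cNbr.mpr (.inl ⟨rfl, rfl⟩), hadj⟩

open scoped Classical in
noncomputable def column (S : Set (Fin m × ZMod n)) (j : ZMod n) : Finset (Fin m) :=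
  {i | (i, j) ∈ S}

@[simp] lemma mem_column {i : Fin m} {j : ZMod n} : i ∈ column S j ↔ (i, j) ∈ S := by
  simp [column]

lemma ncard_eq_sum_card_column [NeZero n] (S : Set (Fin m × ZMod n)) :
    S.ncard = ∑ j, #(column S j) := by
  classical
  have : S.toFinset = ({p | p ∈ S} : Finset _) := by ext; simp
  rw [Set.ncard_eq_toFinset_card', this, card_filter, Fintype.sum_prod_type_right]
  simp only [column, card_filter]

lemma sum_range_card_column_le_ncard [NeZero n] (S : Set (Fin m × ZMod n)) {N : ℕ}
    (hN : N ≤ n) : ∑ t ∈ range N, #(column S t) ≤ S.ncard := by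
  classical
  have hinj : Set.InjOn ((↑) : ℕ → ZMod n) (Finset.range N) := fun t ht t' ht' htt' ↦ by
    rwa [ZMod.natCast_eq_natCast_iff', Nat.mod_eq_of_lt ((Finset.mem_range.mp ht).trans_le hN),
      Nat.mod_eq_of_lt ((Finset.mem_range.mp ht').trans_le hN)] at htt'
  rw [ncard_eq_sum_card_column, ← sum_image (f := fun j ↦ #(column S j)) hinj]
  exact sum_le_sum_of_subset (subset_univ _)

lemma exists_separator (hS : IsSID (KmCn m n) S) {i : Fin m} {k : ZMod n}
    {u : Fin m × ZMod n} (hu : u ≠ (i, k)) :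
    ∃ r l, (r, l) ∈ S ∧ (r = i ∧ l = k ∨ i ≠ r ∧ (k + 1 = l ∨ l + 1 = k)) ∧
      u ∉ cNbr (KmCn m n) (r, l) := by
  obtain ⟨⟨r, l⟩, hcS, hcv, hcu⟩ := (isSID_iff.mp hS).2 _ u hu
  exact ⟨r, l, hcS, mem_cNbr.mp hcv, hcu⟩

variable (hS : IsSID (KmCn m n) S) (j : ZMod n)
include hS

lemma mem_column_or_of_ne {i i' : Fin m} (hii' : i ≠ i') :
    i ∈ column S (j + 1) ∨ i' ∈ column S j ∨ i' ∈ column S (j + 2) := by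
  obtain ⟨r, l, hrl, hc, hu⟩ := exists_separator hS (i := i) (k := j + 1) (u := (i', j + 1))
    (by simp [hii'.symm])
  simp only [mem_cNbr, mem_column] at hu ⊢
  grind

lemma mem_column_or_not_subset_left (hn : 3 ≤ n) (i : Fin m) :
    i ∈ column S j ∨ ¬ column S (j + 1) ⊆ {i} := by
  have := ZMod.two_ne_zero_of_three_le hn
  obtain ⟨r, l, hrl, hc, hu⟩ := exists_separator hS (i := i) (k := j) (u := (i, j - 2))
    (by simpa using this)
  simp only [mem_cNbr, mem_column, Finset.not_subset, Finset.mem_singleton] at hu ⊢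
  grind

lemma mem_column_or_not_subset_right (hn : 3 ≤ n) (i : Fin m) :
    i ∈ column S (j + 2) ∨ ¬ column S (j + 1) ⊆ {i} := by
  have := ZMod.two_ne_zero_of_three_le hn
  obtain ⟨r, l, hrl, hc, hu⟩ := exists_separator hS (i := i) (k := j + 2) (u := (i, j + 2 + 2))
    (by simpa using this)
  simp only [mem_cNbr, mem_column, Finset.not_subset, Finset.mem_singleton] at hu ⊢
  grind

lemma not_subset_pair_or_not_subset_left {i i' : Fin m} (hii' : i ≠ i') :
    ¬ column S j ⊆ {i, i'} ∨ ¬ column S (j + 2) ⊆ {i} := by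
  obtain ⟨r, l, hrl, hc, hu⟩ := exists_separator hS (i := i) (k := j + 1) (u := (i', j))
    (by simp [hii'.symm])
  simp only [mem_cNbr, mem_column, Finset.not_subset, Finset.mem_singleton, Finset.mem_insert]
    at hu ⊢
  grind

lemma not_subset_pair_or_not_subset_right {i i' : Fin m} (hii' : i ≠ i') :
    ¬ column S (j + 2) ⊆ {i, i'} ∨ ¬ column S j ⊆ {i} := by
  obtain ⟨r, l, hrl, hc, hu⟩ := exists_separator hS (i := i) (k := j + 1) (u := (i', j + 2))
    (by simp [hii'.symm])
  simp only [mem_cNbr, mem_column, Finset.not_subset, Finset.mem_singleton, Finset.mem_insert]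
    at hu ⊢
  grind

lemma add_two_le_card_three_columns (hm : 2 ≤ m) (hn : 3 ≤ n) :
    m + 2 ≤ #(column S j) + #(column S (j + 1)) + #(column S (j + 2)) := by
  simpa using card_add_two_le_card_add_card_add_card (α := Fin m) (by simpa using hm)
    (fun _ _ ↦ mem_column_or_of_ne hS j) (mem_column_or_not_subset_left hS j hn)
    (mem_column_or_not_subset_right hS j hn) (fun _ _ ↦ not_subset_pair_or_not_subset_left hS j)
    (fun _ _ ↦ not_subset_pair_or_not_subset_right hS j)

omit j in
lemma div_three_mul_le_ncard (hm : 2 ≤ m) (hn : 3 ≤ n) : n / 3 * (m + 2) ≤ S.ncard := by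
  have : NeZero n := ⟨by omega⟩
  calc n / 3 * (m + 2) ≤ ∑ t ∈ range (3 * (n / 3)), #(column S t) :=
        mul_le_sum_range_of_le_sum_blocks (fun s ↦ by
          simpa [sum_range_succ, add_assoc] using add_two_le_card_three_columns hS (3 * s) hm hn) _
    _ ≤ S.ncard := sum_range_card_column_le_ncard S (Nat.mul_div_le n 3)

end KmCn

theorem stmt16 (m n : ℕ) (hm : 3 ≤ m) (hn : 3 ≤ n) :
    n / 3 * (m + 2) ≤ gammaSID (KmCn m n) :=
  le_gammaSID ⟨_, KmCn.isSID_univ (by omega) hn⟩ fun _ hS ↦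
    KmCn.div_three_mul_le_ncard hS (by omega) hn
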